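/- (Five prohibited patterns.) An execution satisfies SC-Per-Location-2 (i.e., for all events x and y, pol x y implies ¬ com⁺ y x) if and only if there is no pair of events x, y with pol x y such that com y x, or (co;rf) y x, or (fr;rf) y x; equivalently, the execution contains none of the five patterns: pol;co, pol;rf, pol;fr, pol;(co;rf), and pol;(fr;rf) cycles of length two. -/

import Mathlib

/-! Composition of communication edges collapses: co;co ⊆ co, fr;co ⊆ fr, and rf;fr ⊆ co because
a read has a unique rf-source. Every other two-step composite, except co;rf and fr;rf, passes
through an event that would be both a write and a read. Hence each com⁺ edge is a com, co;rf or
fr;rf edge, and these are exactly the five patterns. -/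

section

variable {E : Type*} {W Rd : E → Prop} {co rf fr com : E → E → Prop}

theorem read_of_fr (hfr : ∀ r w, fr r w ↔ ∃ w', rf w' r ∧ co w' w)
    (hrf : ∀ w r, rf w r → W w ∧ Rd r) {r w : E} (h : fr r w) : Rd r := by
  obtain ⟨w', hrf', -⟩ := (hfr r w).mp h
  exact (hrf w' r hrf').2

theorem write_of_fr (hfr : ∀ r w, fr r w ↔ ∃ w', rf w' r ∧ co w' w)
    (hco : ∀ w w', co w w' → W w ∧ W w') {r w : E} (h : fr r w) : W w := by
  obtain ⟨w', -, hco'⟩ := (hfr r w).mp h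
  exact (hco w' w hco').2

theorem fr_of_fr_of_co (hfr : ∀ r w, fr r w ↔ ∃ w', rf w' r ∧ co w' w)
    (hco_trans : ∀ x y z, co x y → co y z → co x z) {r w w' : E}
    (h₁ : fr r w) (h₂ : co w w') : fr r w' := by
  obtain ⟨u, hu, huw⟩ := (hfr r w).mp h₁
  exact (hfr r w').mpr ⟨u, hu, hco_trans _ _ _ huw h₂⟩

theorem co_of_rf_of_fr (hfr : ∀ r w, fr r w ↔ ∃ w', rf w' r ∧ co w' w)
    (hrf_unique : ∀ w w' r, rf w r → rf w' r → w = w') {w r w' : E}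
    (h₁ : rf w r) (h₂ : fr r w') : co w w' := by
  obtain ⟨u, hu, huw⟩ := (hfr r w').mp h₂
  rwa [hrf_unique w u r h₁ hu]

theorem co_of_rf_of_com (hdisj : ∀ e, ¬ (W e ∧ Rd e))
    (hco : ∀ w w', co w w' → W w ∧ W w') (hrf : ∀ w r, rf w r → W w ∧ Rd r)
    (hrf_unique : ∀ w w' r, rf w r → rf w' r → w = w')
    (hfr : ∀ r w, fr r w ↔ ∃ w', rf w' r ∧ co w' w)
    (hcom : ∀ x y, com x y ↔ co x y ∨ rf x y ∨ fr x y) {w r x : E}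
    (h₁ : rf w r) (h₂ : com r x) : co w x := by
  have hr : Rd r := (hrf w r h₁).2
  rcases (hcom r x).mp h₂ with h₂ | h₂ | h₂
  · exact absurd ⟨(hco r x h₂).1, hr⟩ (hdisj r)
  · exact absurd ⟨(hrf r x h₂).1, hr⟩ (hdisj r)
  · exact co_of_rf_of_fr hfr hrf_unique h₁ h₂

theorem com_or_co_rf_or_fr_rf_of_transGen (hdisj : ∀ e, ¬ (W e ∧ Rd e))
    (hco_trans : ∀ x y z, co x y → co y z → co x z)
    (hco : ∀ w w', co w w' → W w ∧ W w') (hrf : ∀ w r, rf w r → W w ∧ Rd r)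
    (hrf_unique : ∀ w w' r, rf w r → rf w' r → w = w')
    (hfr : ∀ r w, fr r w ↔ ∃ w', rf w' r ∧ co w' w)
    (hcom : ∀ x y, com x y ↔ co x y ∨ rf x y ∨ fr x y) {a b : E}
    (h : Relation.TransGen com a b) :
    com a b ∨ (∃ p, co a p ∧ rf p b) ∨ (∃ p, fr a p ∧ rf p b) := by
  have co_of_rf_of_com' {w r x : E} : rf w r → com r x → co w x :=
    co_of_rf_of_com hdisj hco hrf hrf_unique hfr hcom
  induction h with
  | single h => exact .inl h
  | @tail m c _ hmc ih =>
    rcases ih with ham | ⟨p, hap, hpm⟩ | ⟨p, hap, hpm⟩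
    · rcases (hcom a m).mp ham with ham | ham | ham
      · rcases (hcom m c).mp hmc with hmc | hmc | hmc
        · exact .inl ((hcom a c).mpr (.inl (hco_trans _ _ _ ham hmc)))
        · exact .inr (.inl ⟨m, ham, hmc⟩)
        · exact absurd ⟨(hco a m ham).2, read_of_fr hfr hrf hmc⟩ (hdisj m)
      · exact .inl ((hcom a c).mpr (.inl (co_of_rf_of_com' ham hmc)))
      · rcases (hcom m c).mp hmc with hmc | hmc | hmc
        · exact .inl ((hcom a c).mpr (.inr (.inr (fr_of_fr_of_co hfr hco_trans ham hmc))))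
        · exact .inr (.inr ⟨m, ham, hmc⟩)
        · exact absurd ⟨write_of_fr hfr hco ham, read_of_fr hfr hrf hmc⟩ (hdisj m)
    · exact .inl ((hcom a c).mpr (.inl (hco_trans _ _ _ hap (co_of_rf_of_com' hpm hmc))))
    · exact .inl ((hcom a c).mpr
        (.inr (.inr (fr_of_fr_of_co hfr hco_trans hap (co_of_rf_of_com' hpm hmc)))))

end

theorem five_patterns_general {E A : Type*} (W Rd : E → Prop) (addr : E → A)
    (co rf fr com pol : E → E → Prop)
    (hdisj : ∀ e, ¬ (W e ∧ Rd e))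
    (hco_trans : ∀ x y z, co x y → co y z → co x z)
    (hco_wf : ∀ x y, co x y → W x ∧ W y ∧ addr x = addr y)
    (hrf_wf : ∀ w r, rf w r → W w ∧ Rd r ∧ addr w = addr r)
    (hrf_ex : ∀ r, Rd r → ∃! w, rf w r)
    (hfr : ∀ r w, fr r w ↔ ∃ w', rf w' r ∧ co w' w)
    (hcom : ∀ x y, com x y ↔ co x y ∨ rf x y ∨ fr x y) :
    (∀ x y, pol x y → ¬ Relation.TransGen com y x) ↔
      ¬ ∃ x y, pol x y ∧ (com y x ∨ (∃ p, co y p ∧ rf p x) ∨ (∃ p, fr y p ∧ rf p x)) := by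
  have hrf_unique (w w' r : E) (h : rf w r) (h' : rf w' r) : w = w' :=
    (hrf_ex r (hrf_wf w r h).2.1).unique h h'
  constructor
  · rintro h ⟨x, y, hxy, hyx | ⟨p, hyp, hpx⟩ | ⟨p, hyp, hpx⟩⟩
    · exact h x y hxy (.single hyx)
    · exact h x y hxy (.tail (.single ((hcom y p).mpr (.inl hyp))) ((hcom p x).mpr (.inr (.inl hpx))))
    · exact h x y hxy
        (.tail (.single ((hcom y p).mpr (.inr (.inr hyp)))) ((hcom p x).mpr (.inr (.inl hpx))))
  · intro h x y hxy hyx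
    exact h ⟨x, y, hxy, com_or_co_rf_or_fr_rf_of_transGen hdisj hco_trans
      (fun w w' hc => ⟨(hco_wf w w' hc).1, (hco_wf w w' hc).2.1⟩)
      (fun w r hr => ⟨(hrf_wf w r hr).1, (hrf_wf w r hr).2.1⟩) hrf_unique hfr hcom hyx⟩

theorem five_patterns {E A P : Type*} (W Rd : E → Prop) (addr : E → A) (proc : E → P)
    (po co rf fr com pol : E → E → Prop)
    (hdisj : ∀ e, ¬ (W e ∧ Rd e))
    (hpo_irr : ∀ x, ¬ po x x)
    (hpo_trans : ∀ x y z, po x y → po y z → po x z)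
    (hpo_proc : ∀ x y, po x y → proc x = proc y)
    (hpo_total : ∀ x y, x ≠ y → proc x = proc y → po x y ∨ po y x)
    (hco_irr : ∀ x, ¬ co x x)
    (hco_trans : ∀ x y z, co x y → co y z → co x z)
    (hco_wf : ∀ x y, co x y → W x ∧ W y ∧ addr x = addr y)
    (hco_total : ∀ x y, W x → W y → addr x = addr y → co x y ∨ x = y ∨ co y x)
    (hrf_wf : ∀ w r, rf w r → W w ∧ Rd r ∧ addr w = addr r)
    (hrf_ex : ∀ r, Rd r → ∃! w, rf w r)
    (hfr : ∀ r w, fr r w ↔ ∃ w', rf w' r ∧ co w' w)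
    (hcom : ∀ x y, com x y ↔ co x y ∨ rf x y ∨ fr x y)
    (hpol : ∀ x y, pol x y ↔ po x y ∧ addr x = addr y) :
    (∀ x y, pol x y → ¬ Relation.TransGen com y x) ↔
      ¬ ∃ x y, pol x y ∧ (com y x ∨ (∃ p, co y p ∧ rf p x) ∨ (∃ p, fr y p ∧ rf p x)) :=
  five_patterns_general W Rd addr co rf fr com pol hdisj hco_trans hco_wf hrf_wf hrf_ex hfr hcom
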